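/- arXiv:2211.16207 — 5 statements merged into one kernel-verified Lean document; each statement's English description precedes it below -/
import Mathlib

section
/- Let n and d be natural numbers, let f₁, …, f_d be linear functionals on ℝⁿ, and let X = {x ∈ ℝⁿ : fᵢ(x) ≥ 0 for all i} (a finite intersection of closed homogeneous half-spaces, hence a closed convex cone). Let C ⊆ X be a convex cone (i.e. 0 ∈ C, C + C ⊆ C, and r·C ⊆ C for every real r ≥ 0), and let λ ∈ C. Then C is a neighborhood of λ in X (for the subspace topology induced from ℝⁿ) if and only if for every x ∈ X there exists a real number r > 0 such that x + r·λ ∈ C. -/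
open Finset
set_option maxHeartbeats 1000000

/-- Minkowski–Weyl style: a cone cut out by a list of linear functionals on `ℝⁿ` is
finitely generated, with representation mass bounded linearly by the norm. -/
theorem mw_cone (n : ℕ) (l : List ((Fin n → ℝ) →ₗ[ℝ] ℝ)) :
    ∃ (ι : Type) (_ : Fintype ι) (v : ι → (Fin n → ℝ)) (M : ℝ), 0 ≤ M ∧
      (∀ j, ∀ g ∈ l, 0 ≤ g (v j)) ∧
      ∀ x : Fin n → ℝ, (∀ g ∈ l, 0 ≤ g x) →
        ∃ a : ι → ℝ, (∀ j, 0 ≤ a j) ∧ (∑ j, a j • v j) = x ∧ (∑ j, a j) ≤ M * ‖x‖ := by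
  classical
  induction l with
  | nil =>
    refine ⟨Fin n ⊕ Fin n, inferInstance,
      Sum.elim (fun i => Pi.single i 1) (fun i => -Pi.single i 1), n, by positivity,
      by simp, ?_⟩
    intro x _
    refine ⟨Sum.elim (fun i => max (x i) 0) (fun i => max (-x i) 0), ?_, ?_, ?_⟩
    · rintro (j | j) <;> simp [le_max_right]
    · rw [Fintype.sum_sum_type]
      simp only [Sum.elim_inl, Sum.elim_inr]
      rw [← Finset.sum_add_distrib]
      have key : ∀ i : Fin n, max (x i) 0 • (Pi.single i 1 : Fin n → ℝ)
          + max (-x i) 0 • (-Pi.single i 1 : Fin n → ℝ) = Pi.single i (x i) := by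
        intro i
        rw [smul_neg, ← sub_eq_add_neg, ← sub_smul, max_zero_sub_max_neg_zero_eq_self]
        ext k
        rcases eq_or_ne k i with rfl | hk
        · simp
        · simp [Pi.single_eq_of_ne hk]
      rw [Finset.sum_congr rfl fun i _ => key i, Finset.univ_sum_single]
    · rw [Fintype.sum_sum_type]
      simp only [Sum.elim_inl, Sum.elim_inr]
      rw [← Finset.sum_add_distrib]
      have key : ∀ i : Fin n, max (x i) 0 + max (-x i) 0 = |x i| := fun i =>
        max_zero_add_max_neg_zero_eq_abs_self (x i)
      rw [Finset.sum_congr rfl fun i _ => key i]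
      have hle : ∀ i : Fin n, |x i| ≤ ‖x‖ := by
        intro i
        simpa [Real.norm_eq_abs] using norm_le_pi_norm x i
      calc ∑ i, |x i| ≤ ∑ _i : Fin n, ‖x‖ := Finset.sum_le_sum fun i _ => hle i
        _ = n * ‖x‖ := by simp [mul_comm]
  | cons g l ih =>
    obtain ⟨ι, _inst, v, M, hM, hv, hrep⟩ := ih
    obtain ⟨μ, hμ0, hμ⟩ : ∃ μ : ℝ, 0 < μ ∧ ∀ j, 0 < g (v j) → μ ≤ g (v j) := by
      by_cases hs : (univ.filter fun j => 0 < g (v j)).Nonempty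
      · refine ⟨(univ.filter fun j => 0 < g (v j)).inf' hs fun j => g (v j), ?_, ?_⟩
        · obtain ⟨j, hj, hje⟩ := Finset.exists_mem_eq_inf' hs fun j => g (v j)
          rw [hje]; exact (Finset.mem_filter.1 hj).2
        · intro j hj
          exact Finset.inf'_le (fun j => g (v j)) (Finset.mem_filter.2 ⟨Finset.mem_univ _, hj⟩)
      · exact ⟨1, one_pos, fun j hj =>
          absurd ⟨j, Finset.mem_filter.2 ⟨Finset.mem_univ _, hj⟩⟩ hs⟩
    set w : ι ⊕ ι × ι → (Fin n → ℝ) := Sum.elim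
        (fun j => if 0 ≤ g (v j) then v j else 0)
        (fun pq => if 0 < g (v pq.1) ∧ g (v pq.2) < 0
          then g (v pq.1) • v pq.2 - g (v pq.2) • v pq.1 else 0) with hw
    have h1μ : (0:ℝ) ≤ 1 + 1/μ := by positivity
    refine ⟨ι ⊕ ι × ι, inferInstance, w, M * (1 + 1/μ), mul_nonneg hM h1μ, ?_, ?_⟩
    · rintro (j | ⟨p, q⟩) g' hg'
      · simp only [hw, Sum.elim_inl]
        split_ifs with h
        · rcases List.mem_cons.1 hg' with rfl | hg'
          · exact h
          · exact hv j g' hg'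
        · simp
      · simp only [hw, Sum.elim_inr]
        split_ifs with h
        · rcases List.mem_cons.1 hg' with rfl | hg'
          · simp only [map_sub, map_smul, smul_eq_mul]
            nlinarith [h.1, h.2]
          · have h1 := hv p g' hg'
            have h2 := hv q g' hg'
            simp only [map_sub, map_smul, smul_eq_mul]
            nlinarith [h.1, h.2]
        · simp
    · intro x hx
      obtain ⟨a, ha0, hav, haM⟩ := hrep x fun g' hg' => hx g' (List.mem_cons_of_mem _ hg')
      have hgx : 0 ≤ g x := hx g List.mem_cons_self
      set S := ∑ j, (if 0 < g (v j) then a j * g (v j) else 0) with hS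
      set T := ∑ j, (if g (v j) < 0 then a j * (-g (v j)) else 0) with hT
      have hS0 : 0 ≤ S := Finset.sum_nonneg fun j _ => by
        split_ifs with h
        · exact mul_nonneg (ha0 j) h.le
        · exact le_refl 0
      have hT0 : 0 ≤ T := Finset.sum_nonneg fun j _ => by
        split_ifs with h
        · exact mul_nonneg (ha0 j) (by linarith)
        · exact le_refl 0
      have hST : S - T = g x := by
        rw [← hav, map_sum, hS, hT, ← Finset.sum_sub_distrib]
        refine Finset.sum_congr rfl fun j _ => ?_
        rw [map_smul, smul_eq_mul]
        rcases lt_trichotomy (g (v j)) 0 with h | h | h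
        · rw [if_neg (by linarith), if_pos h]; ring
        · simp [h]
        · rw [if_pos h, if_neg (by linarith)]; ring
      -- norm nonneg and M*(1+1/μ) ≥ M
      have hMM : M * ‖x‖ ≤ M * (1 + 1/μ) * ‖x‖ := by
        have h0 : 0 ≤ M * ‖x‖ * (1/μ) :=
          mul_nonneg (mul_nonneg hM (norm_nonneg x)) (by positivity)
        nlinarith [norm_nonneg x]
      rcases le_or_gt T 0 with hTle | hTpos
      · -- degenerate case : no negative mass
        have hTz : T = 0 := le_antisymm hTle hT0
        have hN : ∀ j, g (v j) < 0 → a j = 0 := by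
          intro j hj
          have hnn : ∀ k ∈ (univ : Finset ι), 0 ≤ if g (v k) < 0 then a k * (-g (v k)) else 0 := by
            intro k _
            split_ifs with h
            · exact mul_nonneg (ha0 k) (by linarith)
            · exact le_refl 0
          have hall := (Finset.sum_eq_zero_iff_of_nonneg hnn).1 (by rw [← hT]; exact hTz) j
            (Finset.mem_univ j)
          rw [if_pos hj] at hall
          rcases mul_eq_zero.1 hall with h | h
          · exact h
          · linarith
        refine ⟨Sum.elim a 0, ?_, ?_, ?_⟩
        · rintro (j | pq)
          · exact ha0 j
          · exact le_refl 0
        · rw [Fintype.sum_sum_type]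
          simp only [Sum.elim_inl, Sum.elim_inr, Pi.zero_apply, zero_smul,
            Finset.sum_const_zero, add_zero, hw]
          rw [← hav]
          refine Finset.sum_congr rfl fun j _ => ?_
          split_ifs with h
          · rfl
          · rw [hN j (lt_of_not_ge h)]
            simp
        · rw [Fintype.sum_sum_type]
          simp only [Sum.elim_inl, Sum.elim_inr, Pi.zero_apply,
            Finset.sum_const_zero, add_zero]
          exact le_trans haM hMM
      · -- main case : positive negative-mass T
        have hSpos : 0 < S := by linarith
        have hTS : T / S ≤ 1 := by rw [div_le_one hSpos]; linarith
        have hTSnn : 0 ≤ T / S := div_nonneg hT0 hS0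
        set PS := ∑ j, (if 0 < g (v j) then a j • v j else (0 : Fin n → ℝ)) with hPS
        set ZS := ∑ j, (if g (v j) = 0 then a j • v j else (0 : Fin n → ℝ)) with hZS
        set B := ∑ j, (if g (v j) < 0 then a j • v j else (0 : Fin n → ℝ)) with hB
        have hx_split : PS + ZS + B = x := by
          rw [hPS, hZS, hB, ← Finset.sum_add_distrib, ← Finset.sum_add_distrib, ← hav]
          refine Finset.sum_congr rfl fun j _ => ?_
          rcases lt_trichotomy (g (v j)) 0 with h | h | h
          · rw [if_neg (by linarith), if_neg (by linarith), if_pos h, zero_add, zero_add]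
          · rw [if_neg (by linarith), if_pos h, if_neg (by linarith), zero_add, add_zero]
          · rw [if_pos h, if_neg (by linarith), if_neg (by linarith), add_zero, add_zero]
        set c : ι ⊕ ι × ι → ℝ := Sum.elim
            (fun j => if g (v j) < 0 then 0 else if 0 < g (v j) then a j * (1 - T/S) else a j)
            (fun pq => if 0 < g (v pq.1) ∧ g (v pq.2) < 0 then a pq.1 * a pq.2 / S else 0)
          with hc
        refine ⟨c, ?_, ?_, ?_⟩
        · rintro (j | ⟨p, q⟩)
          · simp only [hc, Sum.elim_inl]
            split_ifs with h1 h2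
            · exact le_refl 0
            · exact mul_nonneg (ha0 j) (by linarith)
            · exact ha0 j
          · simp only [hc, Sum.elim_inr]
            split_ifs with h1
            · exact div_nonneg (mul_nonneg (ha0 p) (ha0 q)) hS0
            · exact le_refl 0
        · -- the representation sums to x
          rw [Fintype.sum_sum_type]
          have hTerm1 : ∑ j, c (Sum.inl j) • w (Sum.inl j) = (1 - T/S) • PS + ZS := by
            rw [hPS, hZS, Finset.smul_sum, ← Finset.sum_add_distrib]
            refine Finset.sum_congr rfl fun j _ => ?_
            simp only [hc, hw, Sum.elim_inl]
            rcases lt_trichotomy (g (v j)) 0 with h | h | h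
            · rw [if_pos h, if_neg (by linarith), if_neg (by linarith), if_neg (by linarith)]
              simp
            · rw [if_neg (by linarith), if_neg (by linarith), if_pos (by linarith),
                if_neg (by linarith), if_pos h]
              rw [smul_zero, zero_add]
            · rw [if_neg (by linarith), if_pos h, if_pos (by linarith), if_pos h,
                if_neg (by linarith)]
              rw [add_zero, smul_smul, mul_comm]
          have hTerm2 : ∑ pq : ι × ι, c (Sum.inr pq) • w (Sum.inr pq) = (T/S) • PS + B := by
            rw [Fintype.sum_prod_type]
            have hinner : ∀ p, (∑ q, c (Sum.inr (p, q)) • w (Sum.inr (p, q)))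
                = (if 0 < g (v p) then (a p * g (v p) / S) • B + ((a p * T) / S) • v p
                    else 0) := by
              intro p
              by_cases hp : 0 < g (v p)
              · rw [if_pos hp]
                have hpt : ∀ q, c (Sum.inr (p, q)) • w (Sum.inr (p, q))
                    = (a p * g (v p) / S) • (if g (v q) < 0 then a q • v q else (0:Fin n → ℝ))
                      + ((a p * (if g (v q) < 0 then a q * (-g (v q)) else 0)) / S) • v p := by
                  intro q
                  simp only [hc, hw, Sum.elim_inr]
                  by_cases hq : g (v q) < 0
                  · rw [if_pos ⟨hp, hq⟩, if_pos ⟨hp, hq⟩, if_pos hq, if_pos hq]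
                    module
                  · rw [if_neg (fun hcon => hq hcon.2), if_neg (fun hcon => hq hcon.2),
                      if_neg hq, if_neg hq]
                    simp
                rw [Finset.sum_congr rfl fun q _ => hpt q, Finset.sum_add_distrib,
                  ← Finset.smul_sum, ← hB, ← Finset.sum_smul, ← Finset.sum_div,
                  ← Finset.mul_sum, ← hT]
              · rw [if_neg hp]
                refine Finset.sum_eq_zero fun q _ => ?_
                simp only [hc, hw, Sum.elim_inr]
                rw [if_neg (fun hcon => hp hcon.1), zero_smul]
            rw [Finset.sum_congr rfl fun p _ => hinner p]
            have hpt2 : ∀ p, (if 0 < g (v p) then (a p * g (v p) / S) • B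
                  + ((a p * T) / S) • v p else 0)
                = ((if 0 < g (v p) then a p * g (v p) else 0) / S) • B
                  + (T/S) • (if 0 < g (v p) then a p • v p else (0:Fin n → ℝ)) := by
              intro p
              by_cases hp : 0 < g (v p)
              · rw [if_pos hp, if_pos hp, if_pos hp]
                module
              · rw [if_neg hp, if_neg hp, if_neg hp]
                simp
            rw [Finset.sum_congr rfl fun p _ => hpt2 p, Finset.sum_add_distrib,
              ← Finset.sum_smul, ← Finset.sum_div, ← hS, div_self (ne_of_gt hSpos),
              one_smul, ← Finset.smul_sum, ← hPS, add_comm]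
          rw [hTerm1, hTerm2, ← hx_split]
          module
        · -- mass bound
          rw [Fintype.sum_sum_type]
          have hpart1 : ∑ j, c (Sum.inl j) ≤ ∑ j, a j := by
            refine Finset.sum_le_sum fun j _ => ?_
            simp only [hc, Sum.elim_inl]
            split_ifs with h1 h2
            · exact ha0 j
            · nlinarith [ha0 j]
            · exact le_refl (a j)
          set AP := ∑ j, (if 0 < g (v j) then a j else 0) with hAP
          set AN := ∑ j, (if g (v j) < 0 then a j else 0) with hAN
          have hAPnn : 0 ≤ AP := Finset.sum_nonneg fun j _ => by
            split_ifs with h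
            · exact ha0 j
            · exact le_refl 0
          have hANnn : 0 ≤ AN := Finset.sum_nonneg fun j _ => by
            split_ifs with h
            · exact ha0 j
            · exact le_refl 0
          have hANle : AN ≤ ∑ j, a j := Finset.sum_le_sum fun j _ => by
            split_ifs with h
            · exact le_refl (a j)
            · exact ha0 j
          have hμAP : μ * AP ≤ S := by
            rw [hAP, hS, Finset.mul_sum]
            refine Finset.sum_le_sum fun j _ => ?_
            split_ifs with h
            · calc μ * a j ≤ g (v j) * a j :=
                    mul_le_mul_of_nonneg_right (hμ j h) (ha0 j)
                _ = a j * g (v j) := mul_comm _ _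
            · simp
          have hpart2 : ∑ pq : ι × ι, c (Sum.inr pq) = AP * AN / S := by
            rw [Fintype.sum_prod_type]
            have hpt : ∀ p q, c (Sum.inr (p, q))
                = (if 0 < g (v p) then a p else 0) * (if g (v q) < 0 then a q else 0) / S := by
              intro p q
              simp only [hc, Sum.elim_inr]
              by_cases hp : 0 < g (v p) <;> by_cases hq : g (v q) < 0
              · rw [if_pos ⟨hp, hq⟩, if_pos hp, if_pos hq]
              · rw [if_neg (fun hcon => hq hcon.2), if_pos hp, if_neg hq, mul_zero, zero_div]
              · rw [if_neg (fun hcon => hp hcon.1), if_neg hp, if_pos hq, zero_mul, zero_div]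
              · rw [if_neg (fun hcon => hp hcon.1), if_neg hp, if_neg hq, zero_mul, zero_div]
            simp only [hpt]
            rw [Finset.sum_congr rfl fun p _ =>
              (by rw [← Finset.sum_div, ← Finset.mul_sum, ← hAN] :
                (∑ q, (if 0 < g (v p) then a p else 0) * (if g (v q) < 0 then a q else 0) / S)
                  = (if 0 < g (v p) then a p else 0) * AN / S)]
            rw [← Finset.sum_div, ← Finset.sum_mul, ← hAP]
          have hbound2 : AP * AN / S ≤ AN * (1 / μ) := by
            rw [div_le_iff₀ hSpos]
            have h1 : μ * (AP * AN) ≤ S * AN := by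
              nlinarith [mul_le_mul_of_nonneg_right hμAP hANnn]
            have hdiv : AP * AN ≤ S * AN / μ := by
              rw [le_div_iff₀ hμ0]
              nlinarith [h1]
            have heq : S * AN / μ = AN * (1 / μ) * S := by ring
            linarith [hdiv, heq.le, heq.ge]
          have hexp : M * (1 + 1/μ) * ‖x‖ = M * ‖x‖ + M * ‖x‖ * (1/μ) := by ring
          have hANM : AN ≤ M * ‖x‖ := le_trans hANle haM
          have h2 : ∑ pq : ι × ι, c (Sum.inr pq) ≤ M * ‖x‖ * (1/μ) := by
            rw [hpart2]
            calc AP * AN / S ≤ AN * (1/μ) := hbound2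
              _ ≤ M * ‖x‖ * (1/μ) :=
                  mul_le_mul_of_nonneg_right hANM (by positivity)
          rw [hexp]
          have h1' : ∑ j, c (Sum.inl j) ≤ M * ‖x‖ := le_trans hpart1 haM
          linarith

/-- Lemma `lem-cone-topo`: a convex cone `C` inside a finite intersection `X` of closed
homogeneous half-spaces of `ℝⁿ` is a neighborhood of a point `lam ∈ C` in the subspace
topology of `X` iff every `x ∈ X` can be pushed into `C` by adding a positive multiple
of `lam`. -/
theorem stmt0 (n d : ℕ) (f : Fin d → ((Fin n → ℝ) →ₗ[ℝ] ℝ))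
    (X : Set (Fin n → ℝ)) (hX : X = {x | ∀ i, 0 ≤ f i x})
    (C : Set (Fin n → ℝ)) (hCX : C ⊆ X)
    (hC0 : (0 : Fin n → ℝ) ∈ C)
    (hCadd : ∀ x ∈ C, ∀ y ∈ C, x + y ∈ C)
    (hCsmul : ∀ r : ℝ, 0 ≤ r → ∀ x ∈ C, r • x ∈ C)
    (lam : Fin n → ℝ) (hlam : lam ∈ C) :
    C ∈ nhdsWithin lam X ↔ ∀ x ∈ X, ∃ r : ℝ, 0 < r ∧ x + r • lam ∈ C := by
  classical
  subst hX
  have hlamX : ∀ i, 0 ≤ f i lam := hCX hlam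
  constructor
  · -- easy direction
    intro hC x hx
    obtain ⟨ε, hε, hsub⟩ := Metric.mem_nhdsWithin_iff.1 hC
    set t : ℝ := ε / (2 * (‖x‖ + 1)) with ht
    have hx1 : (0:ℝ) < ‖x‖ + 1 := by positivity
    have htpos : 0 < t := by positivity
    have h1 : lam + t • x ∈ Metric.ball lam ε ∩ {x | ∀ i, 0 ≤ f i x} := by
      constructor
      · rw [Metric.mem_ball, dist_eq_norm, add_sub_cancel_left, norm_smul,
          Real.norm_eq_abs, abs_of_pos htpos]
        have hne : ‖x‖ + 1 ≠ 0 := hx1.ne'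
        have he : t * ‖x‖ + t = ε / 2 := by
          rw [ht]; field_simp
        linarith [htpos, hε]
      · intro i
        simp only [Set.mem_setOf_eq, map_add, map_smul, smul_eq_mul]
        exact add_nonneg (hlamX i) (mul_nonneg htpos.le (hx i))
    have h2 : lam + t • x ∈ C := hsub h1
    refine ⟨1/t, by positivity, ?_⟩
    have h3 := hCsmul (1/t) (by positivity) _ h2
    have heq : (1/t) • (lam + t • x) = x + (1/t) • lam := by
      rw [smul_add, smul_smul, one_div_mul_cancel htpos.ne', one_smul, add_comm]
    rwa [heq] at h3
  · -- hard direction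
    intro h
    obtain ⟨ι, _inst, v, M, hM, hv, hrep⟩ := mw_cone n
      ((List.finRange d).map fun i => if f i lam = 0 then f i else 0)
    -- push-in constants for the generators
    have hpush : ∀ j, ∃ R : ℝ, 0 < R ∧ v j + R • lam ∈ C := by
      intro j
      have hvj : ∀ i, f i lam = 0 → 0 ≤ f i (v j) := by
        intro i hi
        have hmem : f i ∈ (List.finRange d).map fun i => if f i lam = 0 then f i else 0 :=
          List.mem_map.2 ⟨i, List.mem_finRange i, by rw [if_pos hi]⟩
        exact hv j (f i) hmem
      have hev : ∀ᶠ t : ℝ in nhdsWithin 0 (Set.Ioi 0),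
          ∀ i, 0 ≤ f i (lam + t • v j) := by
        refine Filter.eventually_all.2 fun i => ?_
        rcases eq_or_lt_of_le (hlamX i) with hi | hi
        · filter_upwards [eventually_mem_nhdsWithin] with t ht
          have ht0 : 0 < t := ht
          simp only [map_add, map_smul, smul_eq_mul, ← hi, zero_add]
          exact mul_nonneg ht0.le (hvj i hi.symm)
        · have hc : Filter.Tendsto (fun t : ℝ => f i lam + t * f i (v j))
              (nhdsWithin 0 (Set.Ioi 0)) (nhds (f i lam + 0 * f i (v j))) :=
            ((continuous_const.add (continuous_id.mul continuous_const)).tendsto 0).mono_left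
              nhdsWithin_le_nhds
          have h0 : (0:ℝ) < f i lam + 0 * f i (v j) := by simpa using hi
          filter_upwards [hc.eventually (eventually_gt_nhds h0)] with t ht
          simp only [map_add, map_smul, smul_eq_mul]
          linarith [ht]
      obtain ⟨t, htX, ht0⟩ := (hev.and eventually_mem_nhdsWithin).exists
      have ht0' : (0:ℝ) < t := ht0
      obtain ⟨r, hr, hrC⟩ := h (lam + t • v j) htX
      refine ⟨(1 + r)/t, by positivity, ?_⟩
      have h3 := hCsmul (1/t) (by positivity) _ hrC
      have heq : (1/t) • ((lam + t • v j) + r • lam) = v j + ((1 + r)/t) • lam := by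
        rw [smul_add, smul_add, smul_smul, one_div_mul_cancel ht0'.ne', one_smul,
          smul_smul, add_div, add_smul, one_div_mul_eq_div]
        abel
      rwa [heq] at h3
    choose R hR0 hRC using hpush
    set R' : ℝ := (∑ j, R j) + 1 with hR'
    have hRsum : 0 ≤ ∑ j, R j := Finset.sum_nonneg fun j _ => (hR0 j).le
    have hR'pos : 0 < R' := by rw [hR']; linarith
    have hvC : ∀ j, v j + R' • lam ∈ C := by
      intro j
      have hle : R j ≤ R' := by
        have := Finset.single_le_sum (f := R) (fun k _ => (hR0 k).le) (Finset.mem_univ j)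
        rw [hR']; linarith
      have heq : v j + R' • lam = (v j + R j • lam) + (R' - R j) • lam := by
        rw [sub_smul]; abel
      rw [heq]
      exact hCadd _ (hRC j) _ (hCsmul _ (by linarith) _ hlam)
    set δ : ℝ := 1 / (R' * M + 1) with hδ
    have hδpos : 0 < δ := by rw [hδ]; positivity
    rw [Metric.mem_nhdsWithin_iff]
    refine ⟨δ, hδpos, ?_⟩
    rintro x ⟨hxb, hxX⟩
    have hu : ∀ g' ∈ (List.finRange d).map fun i => if f i lam = 0 then f i else 0,
        0 ≤ g' (x - lam) := by
      intro g' hg'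
      obtain ⟨i, _, rfl⟩ := List.mem_map.1 hg'
      split_ifs with hi
      · rw [map_sub, hi, sub_zero]
        exact hxX i
      · simp
    obtain ⟨a, ha0, hav, haM⟩ := hrep (x - lam) hu
    have hnorm : ‖x - lam‖ < δ := by rwa [Metric.mem_ball, dist_eq_norm] at hxb
    have hmass : (∑ j, a j) * R' ≤ 1 := by
      have h1 : (∑ j, a j) ≤ M * δ := by
        calc (∑ j, a j) ≤ M * ‖x - lam‖ := haM
          _ ≤ M * δ := mul_le_mul_of_nonneg_left hnorm.le hM
      have h2 : M * δ * R' ≤ 1 := by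
        have hpos : (0:ℝ) < R' * M + 1 := by positivity
        have heq2 : M * δ * R' = (M * R') / (R' * M + 1) := by rw [hδ]; ring
        rw [heq2, div_le_one hpos]
        linarith
      calc (∑ j, a j) * R' ≤ (M * δ) * R' := mul_le_mul_of_nonneg_right h1 hR'pos.le
        _ ≤ 1 := h2
    have hmass0 : 0 ≤ ∑ j, a j := Finset.sum_nonneg fun j _ => ha0 j
    have hx_eq : x = (∑ j, a j • (v j + R' • lam)) + (1 - (∑ j, a j) * R') • lam := by
      have hsum : ∑ j, a j • (v j + R' • lam)
          = (∑ j, a j • v j) + ((∑ j, a j) * R') • lam := by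
        rw [Finset.sum_congr rfl fun j (_ : j ∈ Finset.univ) =>
            (by rw [smul_add, smul_smul] :
              a j • (v j + R' • lam) = a j • v j + (a j * R') • lam),
          Finset.sum_add_distrib, ← Finset.sum_smul, ← Finset.sum_mul]
      rw [hsum, hav, sub_smul, one_smul]
      abel
    rw [hx_eq]
    apply hCadd
    · exact Finset.sum_induction _ (· ∈ C) (fun p q hp hq => hCadd p hp q hq) hC0
        (fun j _ => hCsmul _ (ha0 j) _ (hvC j))
    · exact hCsmul _ (by linarith) _ hlam
end

section
/- Let n and d be natural numbers, let u₁, …, u_d be linear functionals on ℝⁿ, let m₁, …, m_d be nonnegative real numbers, and let X = {x ∈ ℝⁿ : uᵢ(x) ≤ mᵢ for all i} (a finite intersection of closed half-spaces containing 0). Let Y ⊆ X be a convex subset with 0 ∈ Y such that for every x ∈ X there exists a real number r > 0 with r·x ∈ Y. Then Y is a neighborhood of 0 in X (for the subspace topology induced from ℝⁿ). -/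
set_option maxHeartbeats 1000000

open Module Set Finset

private lemma base_case' {E : Type} [NormedAddCommGroup E] [NormedSpace ℝ E]
    [FiniteDimensional ℝ E]
    (Y : Set E) (hconv : Convex ℝ Y) (h0 : (0:E) ∈ Y)
    (habs : ∀ x : E, ∃ r : ℝ, 0 < r ∧ r • x ∈ Y) :
    ∃ ε : ℝ, 0 < ε ∧ ∀ x : E, ‖x‖ ≤ ε → x ∈ Y := by
  have hspan : affineSpan ℝ Y = ⊤ := by
    rw [AffineSubspace.affineSpan_eq_top_iff_vectorSpan_eq_top_of_nonempty ℝ E E ⟨0, h0⟩]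
    rw [eq_top_iff]
    intro x _
    obtain ⟨r, hr, hrY⟩ := habs x
    have : r • x ∈ vectorSpan ℝ Y := by
      have h1 := vectorSpan_mono ℝ (Set.pair_subset hrY h0)
      have h2 : r • x ∈ vectorSpan ℝ ({r • x, 0} : Set E) := by
        have := vsub_mem_vectorSpan ℝ (Set.mem_insert (r • x) {0})
          (Set.mem_insert_of_mem _ rfl : (0:E) ∈ ({r • x, 0} : Set E))
        simpa using this
      exact h1 h2
    have h3 : r⁻¹ • (r • x) ∈ vectorSpan ℝ Y := Submodule.smul_mem _ _ this
    rwa [inv_smul_smul₀ (ne_of_gt hr)] at h3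
  have hint : (interior Y).Nonempty := (hconv.interior_nonempty_iff_affineSpan_eq_top).2 hspan
  obtain ⟨z, hz⟩ := hint
  obtain ⟨r, hr, hrY⟩ := habs (-z)
  have h0i : (0:E) ∈ interior Y := by
    have hc := hconv.combo_interior_self_mem_interior hz hrY
      (a := r/(1+r)) (b := 1/(1+r)) (by positivity) (by positivity) (by field_simp; ring)
    have : (r/(1+r)) • z + (1/(1+r)) • (r • (-z)) = 0 := by
      rw [smul_smul, smul_neg]
      rw [← sub_eq_add_neg, sub_eq_zero]
      congr 1
      field_simp
    rwa [this] at hc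
  obtain ⟨ε, hε, hball⟩ := Metric.isOpen_iff.1 isOpen_interior 0 h0i
  refine ⟨ε/2, by positivity, fun x hx => ?_⟩
  have : x ∈ Metric.ball (0:E) ε := by
    rw [Metric.mem_ball, dist_zero_right]; linarith
  exact interior_subset (hball this)

private lemma cone_aux' : ∀ (N : ℕ) (E : Type) (_ : NormedAddCommGroup E),
    ∀ (_ : @NormedSpace ℝ E _ _)
    (_ : FiniteDimensional ℝ E), finrank ℝ E ≤ N →
    ∀ (d : ℕ) (u : Fin d → E →ₗ[ℝ] ℝ) (Y : Set E), Convex ℝ Y → (0:E) ∈ Y →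
    (∀ y ∈ Y, ∀ i, u i y ≤ 0) →
    (∀ x : E, (∀ i, u i x ≤ 0) → ∃ r : ℝ, 0 < r ∧ r • x ∈ Y) →
    ∃ ε : ℝ, 0 < ε ∧ ∀ x : E, (∀ i, u i x ≤ 0) → ‖x‖ ≤ ε → x ∈ Y := by
  intro N
  induction N with
  | zero =>
    intro E _inst1 _inst2 _inst3 hrank d u Y hconv h0 hYC habs
    have : Subsingleton E := by
      have : finrank ℝ E = 0 := Nat.le_zero.1 hrank
      exact finrank_zero_iff.1 this
    exact ⟨1, one_pos, fun x _ _ => by rwa [Subsingleton.elim x 0]⟩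
  | succ N IH =>
    intro E _inst1 _inst2 _inst3 hrank d u Y hconv h0 hYC habs
    classical
    -- recursion into a facet
    have hker : ∀ i : Fin d, u i ≠ 0 →
        ∃ ε : ℝ, 0 < ε ∧ ∀ w : E, (∀ j, u j w ≤ 0) → u i w = 0 → ‖w‖ ≤ ε → w ∈ Y := by
      intro i hi
      set H := LinearMap.ker (u i) with hH
      have hrangetop : LinearMap.range (u i) = ⊤ := by
        obtain ⟨x, hx⟩ : ∃ x, u i x ≠ 0 := by
          by_contra hc
          push_neg at hc
          exact hi (LinearMap.ext fun x => by simpa using hc x)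
        rw [LinearMap.range_eq_top]
        intro c
        exact ⟨(c / u i x) • x, by rw [map_smul, smul_eq_mul]; field_simp⟩
      have hrankH : finrank ℝ H ≤ N := by
        have h1 := LinearMap.finrank_range_add_finrank_ker (u i)
        rw [hrangetop, finrank_top, finrank_self] at h1
        rw [hH]
        omega
      have hres := IH H inferInstance inferInstance inferInstance hrankH d
        (fun j => (u j).comp H.subtype) (((↑) : H → E) ⁻¹' Y)
        (hconv.linear_preimage H.subtype)
        (by simpa using h0)
        (fun y hy j => hYC _ hy j)
        (fun x hx => by
          obtain ⟨r, hr, hrY⟩ := habs (x : E) (fun j => hx j)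
          exact ⟨r, hr, by simpa using hrY⟩)
      obtain ⟨ε, hε, hY'⟩ := hres
      refine ⟨ε, hε, fun w hwC hwi hwn => ?_⟩
      exact hY' ⟨w, LinearMap.mem_ker.2 hwi⟩ (fun j => hwC j) hwn
    by_cases hall : ∀ i, u i = 0
    · obtain ⟨ε, hε, hb⟩ := base_case' Y hconv h0
        (fun x => habs x (fun i => by rw [hall i]; simp))
      exact ⟨ε, hε, fun x _ hxn => hb x hxn⟩
    · push_neg at hall
      obtain ⟨i₀, hi₀⟩ := hall
      by_cases hA : ∃ i, u i ≠ 0 ∧ ∀ x, (∀ j, u j x ≤ 0) → 0 ≤ u i x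
      · obtain ⟨i, hi, hiC⟩ := hA
        obtain ⟨ε, hε, hY⟩ := hker i hi
        exact ⟨ε, hε, fun x hx hxn => hY x hx (le_antisymm (hx i) (hiC x hx)) hxn⟩
      · push_neg at hA
        -- interior-direction point z
        have hA' : ∀ i, ∃ x, (∀ j, u j x ≤ 0) ∧ (u i ≠ 0 → u i x < 0) := by
          intro i
          by_cases h : u i = 0
          · exact ⟨0, by simp, fun h' => absurd h h'⟩
          · obtain ⟨x, hx1, hx2⟩ := hA i h
            exact ⟨x, hx1, fun _ => hx2⟩
        choose xs hxsC hxsneg using hA'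
        set z0 := ∑ i, xs i with hz0
        have hz0C : ∀ j, u j z0 ≤ 0 := fun j => by
          rw [map_sum]; exact Finset.sum_nonpos (fun i _ => hxsC i j)
        have hz0neg : ∀ j, u j ≠ 0 → u j z0 < 0 := by
          intro j hj
          rw [map_sum]
          have h1 : ∑ i ∈ Finset.univ.erase j, u j (xs i) ≤ 0 :=
            Finset.sum_nonpos (fun i _ => hxsC i j)
          have h2 := Finset.add_sum_erase Finset.univ (fun i => u j (xs i)) (Finset.mem_univ j)
          have h3 := hxsneg j hj
          calc ∑ i, u j (xs i) = u j (xs j) + ∑ i ∈ Finset.univ.erase j, u j (xs i) := h2.symm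
            _ < 0 := by linarith
        obtain ⟨r, hr, hrz⟩ := habs z0 hz0C
        set z := r • z0 with hzdef
        have hzY : z ∈ Y := hrz
        have hzC : ∀ j, u j z ≤ 0 := fun j => by
          rw [hzdef, map_smul, smul_eq_mul]
          exact mul_nonpos_of_nonneg_of_nonpos hr.le (hz0C j)
        have hzneg : ∀ j, u j ≠ 0 → u j z < 0 := fun j hj => by
          rw [hzdef, map_smul, smul_eq_mul]
          exact mul_neg_of_pos_of_neg hr (hz0neg j hj)
        -- facet epsilons
        have hfac : ∀ i, ∃ ε : ℝ, 0 < ε ∧ (u i ≠ 0 →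
            ∀ w : E, (∀ j, u j w ≤ 0) → u i w = 0 → ‖w‖ ≤ ε → w ∈ Y) := by
          intro i
          by_cases h : u i = 0
          · exact ⟨1, one_pos, fun h' => absurd h h'⟩
          · obtain ⟨ε, hε, hh⟩ := hker i h
            exact ⟨ε, hε, fun _ => hh⟩
        choose εf hεf hfacY using hfac
        have hne : (Finset.univ : Finset (Fin d)).Nonempty := ⟨i₀, Finset.mem_univ _⟩
        set εm := Finset.univ.inf' hne εf with hεm_def
        have hεm : 0 < εm := (Finset.lt_inf'_iff hne).2 (fun i _ => hεf i)
        set K := Finset.univ.sup' hne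
          (fun i => ‖LinearMap.toContinuousLinearMap (u i)‖ / (-(u i z))) with hK_def
        have hK0 : 0 ≤ K := by
          refine le_trans ?_ (Finset.le_sup' _ (Finset.mem_univ i₀))
          have h5 : u i₀ z < 0 := hzneg i₀ hi₀
          exact div_nonneg (norm_nonneg _) (by linarith)
        set B := 1 + K * ‖z‖ with hB_def
        have hB : 0 < B := by positivity
        set D := K + B / εm with hD_def
        have hD0 : 0 ≤ D := by positivity
        set ε := 1 / (1 + D) with hε_def
        have hεpos : 0 < ε := by positivity
        have hkey : K * ε + B * ε / εm ≤ 1 := by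
          have h1 : K * ε + B * ε / εm = ε * D := by
            rw [hD_def]; field_simp
          rw [h1, hε_def]
          rw [div_mul_eq_mul_div, div_le_one (by positivity)]
          linarith
        refine ⟨ε, hεpos, fun x hx hxn => ?_⟩
        set T := Finset.univ.filter (fun i => u i ≠ 0) with hT_def
        have hTne : T.Nonempty := ⟨i₀, by simp [hT_def, hi₀]⟩
        have hTmem : ∀ j ∈ T, u j ≠ 0 := fun j hj => (Finset.mem_filter.1 hj).2
        set t := T.inf' hTne (fun i => u i x / u i z) with ht_def
        obtain ⟨i₁, hi₁T, hi₁eq⟩ := Finset.exists_mem_eq_inf' hTne (fun i => u i x / u i z)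
        have hi₁ : u i₁ ≠ 0 := hTmem i₁ hi₁T
        have ht1 : t = u i₁ x / u i₁ z := hi₁eq
        have hz1 : u i₁ z < 0 := hzneg i₁ hi₁
        have hdiv_nonneg : ∀ j ∈ T, 0 ≤ u j x / u j z := by
          intro j hj
          rw [← neg_div_neg_eq]
          exact div_nonneg (by linarith [hx j]) (by linarith [hzneg j (hTmem j hj)])
        have ht0 : 0 ≤ t := (Finset.le_inf'_iff hTne _).2 hdiv_nonneg
        have htle : ∀ j ∈ T, t ≤ u j x / u j z := fun j hj => Finset.inf'_le _ hj
        set w := x - t • z with hw_def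
        have hwC : ∀ j, u j w ≤ 0 := by
          intro j
          rw [hw_def, map_sub, map_smul, smul_eq_mul]
          by_cases hj : u j = 0
          · simp [hj]
          · have h1 : t ≤ u j x / u j z := htle j (by simp [hT_def, hj])
            have h2 : u j z < 0 := hzneg j hj
            have h3 := (le_div_iff_of_neg h2).1 h1
            linarith
        have hwi₁ : u i₁ w = 0 := by
          rw [hw_def, map_sub, map_smul, smul_eq_mul, ht1,
            div_mul_cancel₀ _ (ne_of_lt hz1), sub_self]
        have hCLM : ∀ j (v : E), |u j v| ≤ ‖LinearMap.toContinuousLinearMap (u j)‖ * ‖v‖ := by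
          intro j v
          have := (LinearMap.toContinuousLinearMap (u j)).le_opNorm v
          simpa using this
        have htbound : t ≤ K * ‖x‖ := by
          have h4 : t ≤ (‖LinearMap.toContinuousLinearMap (u i₁)‖ * ‖x‖) / (-(u i₁ z)) := by
            rw [ht1, ← neg_div_neg_eq]
            apply div_le_div_of_nonneg_right ?_ (by linarith)
            · calc -(u i₁ x) ≤ |u i₁ x| := neg_le_abs _
                _ ≤ ‖LinearMap.toContinuousLinearMap (u i₁)‖ * ‖x‖ := hCLM i₁ x
          calc t ≤ (‖LinearMap.toContinuousLinearMap (u i₁)‖ * ‖x‖) / (-(u i₁ z)) := h4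
            _ = (‖LinearMap.toContinuousLinearMap (u i₁)‖ / (-(u i₁ z))) * ‖x‖ := by ring
            _ ≤ K * ‖x‖ := by
                refine mul_le_mul_of_nonneg_right ?_ (norm_nonneg x)
                rw [hK_def]
                exact Finset.le_sup' (fun i => ‖LinearMap.toContinuousLinearMap (u i)‖ / (-(u i z))) (Finset.mem_univ i₁)
        have hKxε : K * ‖x‖ ≤ K * ε := mul_le_mul_of_nonneg_left hxn hK0
        have hwnorm : ‖w‖ ≤ B * ‖x‖ := by
          calc ‖w‖ ≤ ‖x‖ + ‖t • z‖ := norm_sub_le x (t • z)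
            _ = ‖x‖ + t * ‖z‖ := by rw [norm_smul, Real.norm_eq_abs, abs_of_nonneg ht0]
            _ ≤ ‖x‖ + (K * ‖x‖) * ‖z‖ := by
                have := mul_le_mul_of_nonneg_right htbound (norm_nonneg z)
                linarith
            _ = B * ‖x‖ := by rw [hB_def]; ring
        have hεmle : εm ≤ εf i₁ := Finset.inf'_le _ (Finset.mem_univ i₁)
        have hBdivpos : (0:ℝ) ≤ B * ε / εm := by positivity
        by_cases hw0 : w = 0
        · have hxz : x = t • z := by
            have : x - t • z = 0 := hw0
            rw [← sub_eq_zero]; exact this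
          have ht1' : t ≤ 1 := by
            have : K * ε ≤ 1 := by linarith
            linarith [le_trans htbound hKxε]
          have hmem := hconv hzY h0 ht0 (by linarith : (0:ℝ) ≤ 1 - t) (by ring)
          rw [smul_zero, add_zero] at hmem
          rwa [hxz]
        · have hwne : ‖w‖ ≠ 0 := norm_ne_zero_iff.2 hw0
          have hwpos : 0 < ‖w‖ := lt_of_le_of_ne (norm_nonneg w) (Ne.symm hwne)
          set θ := ‖w‖ / εm with hθ_def
          have hθpos : 0 < θ := div_pos hwpos hεm
          set w' := θ⁻¹ • w with hw'_def
          have hw'C : ∀ j, u j w' ≤ 0 := fun j => by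
            rw [hw'_def, map_smul, smul_eq_mul]
            exact mul_nonpos_of_nonneg_of_nonpos (inv_nonneg.2 hθpos.le) (hwC j)
          have hw'i₁ : u i₁ w' = 0 := by rw [hw'_def, map_smul, smul_eq_mul, hwi₁, mul_zero]
          have hw'n : ‖w'‖ = εm := by
            rw [hw'_def, norm_smul, norm_inv, Real.norm_eq_abs, abs_of_pos hθpos, hθ_def,
              inv_div, div_mul_cancel₀ _ hwne]
          have hw'Y : w' ∈ Y := hfacY i₁ hi₁ w' hw'C hw'i₁ (by rw [hw'n]; exact hεmle)
          have hθb : θ ≤ B * ε / εm := by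
            rw [hθ_def]
            apply div_le_div_of_nonneg_right ?_ hεm.le
            calc ‖w‖ ≤ B * ‖x‖ := hwnorm
              _ ≤ B * ε := mul_le_mul_of_nonneg_left hxn hB.le
          have hts : t + θ ≤ 1 := by
            have h5 : t ≤ K * ε := le_trans htbound hKxε
            linarith
          set s := t + θ with hs_def
          have hspos : 0 < s := by linarith
          have hq : (t/s) • z + (θ/s) • w' ∈ Y :=
            hconv hzY hw'Y (div_nonneg ht0 hspos.le) (div_nonneg hθpos.le hspos.le)
              (by field_simp; exact hs_def.symm)
          have hmem := hconv hq h0 hspos.le (by linarith : (0:ℝ) ≤ 1 - s) (by ring)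
          have hxe : s • ((t/s) • z + (θ/s) • w') + (1 - s) • (0:E) = x := by
            have hwx : x = t • z + θ • w' := by
              rw [hw'_def, smul_inv_smul₀ hθpos.ne', hw_def]
              abel
            have e1 : s * (t / s) = t := by field_simp
            have e2 : s * (θ / s) = θ := by field_simp
            rw [hwx, smul_zero, add_zero, smul_add, smul_smul s (t/s), smul_smul s (θ/s), e1, e2]
          rwa [hxe] at hmem

/-- Convexity claim inside the proof of Lemma `lem-cone-topo`: a convex subset `Y`
containing `0` of a finite intersection `X` of closed half-spaces (with `0 ∈ X`),
which absorbs every point of `X` (some positive scaling of each `x ∈ X` lies in `Y`),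
is a neighborhood of `0` in the subspace topology of `X`. -/
theorem stmt1 (n d : ℕ) (u : Fin d → ((Fin n → ℝ) →ₗ[ℝ] ℝ))
    (m : Fin d → ℝ) (hm : ∀ i, 0 ≤ m i)
    (X : Set (Fin n → ℝ)) (hX : X = {x | ∀ i, u i x ≤ m i})
    (Y : Set (Fin n → ℝ)) (hYX : Y ⊆ X)
    (hY0 : (0 : Fin n → ℝ) ∈ Y)
    (hYconv : Convex ℝ Y)
    (habs : ∀ x ∈ X, ∃ r : ℝ, 0 < r ∧ r • x ∈ Y) :
    Y ∈ nhdsWithin 0 X := by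
  classical
  set u' : Fin d → ((Fin n → ℝ) →ₗ[ℝ] ℝ) := fun i => if m i = 0 then u i else 0 with hu'
  have hXC : ∀ x ∈ X, ∀ i, u' i x ≤ 0 := by
    intro x hxX i
    rw [hX] at hxX
    by_cases hmi : m i = 0
    · simp only [hu', if_pos hmi]
      calc u i x ≤ m i := hxX i
        _ = 0 := hmi
    · simp [hu', if_neg hmi]
  have hYC : ∀ y ∈ Y, ∀ i, u' i y ≤ 0 := fun y hy i => hXC y (hYX hy) i
  have habs' : ∀ x : Fin n → ℝ, (∀ i, u' i x ≤ 0) → ∃ r : ℝ, 0 < r ∧ r • x ∈ Y := by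
    intro c hc
    have hev : ∀ i, ∀ᶠ τ : ℝ in nhdsWithin 0 (Set.Ioi 0), u i (τ • c) ≤ m i := by
      intro i
      by_cases hmi : m i = 0
      · have hc' : u i c ≤ 0 := by
          have := hc i
          simpa [hu', if_pos hmi] using this
        filter_upwards [self_mem_nhdsWithin] with τ hτ
        rw [map_smul, smul_eq_mul, hmi]
        exact mul_nonpos_of_nonneg_of_nonpos (le_of_lt hτ) hc'
      · have hmi' : 0 < m i := lt_of_le_of_ne (hm i) (Ne.symm hmi)
        have hcont : Filter.Tendsto (fun τ : ℝ => u i (τ • c))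
            (nhdsWithin 0 (Set.Ioi 0)) (nhds 0) := by
          have h1 : Filter.Tendsto (fun τ : ℝ => τ * u i c) (nhds 0) (nhds 0) := by
            have := (continuous_mul_right (u i c)).tendsto (0:ℝ)
            simpa using this
          have h2 : (fun τ : ℝ => u i (τ • c)) = fun τ : ℝ => τ * u i c := by
            funext τ; rw [map_smul, smul_eq_mul]
          rw [h2]
          exact h1.mono_left nhdsWithin_le_nhds
        have := hcont.eventually_lt_const hmi'
        filter_upwards [this] with τ hτ using hτ.le
    have hall : ∀ᶠ τ : ℝ in nhdsWithin 0 (Set.Ioi 0), ∀ i, u i (τ • c) ≤ m i :=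
      Filter.eventually_all.2 hev
    obtain ⟨τ, hτ, hτmem⟩ := (hall.and self_mem_nhdsWithin).exists
    have hτpos : (0:ℝ) < τ := hτmem
    have hτX : τ • c ∈ X := by rw [hX]; exact fun i => hτ i
    obtain ⟨r, hr, hrY⟩ := habs (τ • c) hτX
    refine ⟨r * τ, mul_pos hr hτpos, ?_⟩
    rwa [mul_smul]
  obtain ⟨ε, hε, hY⟩ := cone_aux' (finrank ℝ (Fin n → ℝ)) (Fin n → ℝ)
    inferInstance inferInstance inferInstance le_rfl d u' Y hYconv hY0 hYC habs'
  refine Metric.mem_nhdsWithin_iff.2 ⟨ε, hε, ?_⟩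
  rintro y ⟨hyb, hyX⟩
  refine hY y (hXC y hyX) ?_
  rw [Metric.mem_ball, dist_zero_right] at hyb
  linarith
end

section
/- Let V be a vector space over ℚ, let g and s be ℚ-linear endomorphisms of V with g ∘ s = s ∘ g, g ∘ g = id and s^{2n} = id for a fixed integer n ≥ 1, let φ : V → ℚ be ℚ-linear, and let q ∈ ℚ. Suppose v ∈ V satisfies g(s^{2n−1}(v)) = −v. Then (q + 1) · ∑_{i=0}^{2n−1} qⁱ · φ( gⁱ( s^{2n−i}( g(v) ) ) ) = −(q^{2n} − 1) · φ(g(v)). -/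
/-! With `T := g * s ^ (2n - 1)`, which plays the role of `g s⁻¹`, the `i`-th summand is
`qⁱ φ(Tⁱ (g v))`, and the Hasse-type condition makes `g v` an eigenvector of `T` with
eigenvalue `-1`. The sum is therefore the alternating geometric sum
`φ(g v) · ∑ (-q)ⁱ`, which `q + 1` telescopes to `1 - q^{2n}`. -/

open Finset

theorem pow_sub_eq_pow_pred_pow {M : Type*} [Monoid M] {s : M} {m : ℕ} (hs : s ^ m = 1)
    {i : ℕ} (hi : i ≤ m) : s ^ (m - i) = (s ^ (m - 1)) ^ i := by
  obtain _ | k := i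
  · simp [hs]
  obtain ⟨r, rfl⟩ := Nat.exists_eq_add_of_le hi
  rw [show k + 1 + r - (k + 1) = r by omega, show k + 1 + r - 1 = k + r by omega, ← pow_mul,
    show (k + r) * (k + 1) = (k + 1 + r) * k + r by ring, pow_add, pow_mul, hs, one_pow, one_mul]

theorem Module.End.pow_apply_of_apply_eq_neg {R M : Type*} [Ring R] [AddCommGroup M]
    [Module R M] {T : Module.End R M} {w : M} (hw : T w = -w) (i : ℕ) :
    (T ^ i) w = (-1 : R) ^ i • w := by
  induction i with
  | zero => simp
  | succ i ih => rw [pow_succ', Module.End.mul_apply, ih, map_smul, hw, pow_succ', smul_neg,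
      neg_one_mul, neg_smul]

theorem add_one_mul_geom_sum_neg {R : Type*} [CommRing R] (q : R) (n : ℕ) :
    (q + 1) * ∑ i ∈ range (2 * n), (-q) ^ i = -(q ^ (2 * n) - 1) := by
  have h := geom_sum_mul_neg (-q) (2 * n)
  rw [(even_two_mul n).neg_pow] at h
  linear_combination h

theorem stmt7_general (V : Type*) [AddCommGroup V] [Module ℚ V]
    (g s : Module.End ℚ V) (hcomm : g * s = s * g)
    (n : ℕ) (hs : s ^ (2 * n) = 1)
    (φ : V →ₗ[ℚ] ℚ) (q : ℚ)
    (v : V) (hv : g ((s ^ (2 * n - 1)) v) = -v) :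
    (q + 1) * ∑ i ∈ Finset.range (2 * n), q ^ i * φ ((g ^ i) ((s ^ (2 * n - i)) (g v)))
      = -((q ^ (2 * n) - 1) * φ (g v)) := by
  set T := g * s ^ (2 * n - 1)
  have hcomm' : Commute g (s ^ (2 * n - 1)) := Commute.pow_right hcomm _
  have hT : T (g v) = -g v := by
    rw [← Module.End.mul_apply, mul_assoc, ← hcomm'.eq, Module.End.mul_apply,
      Module.End.mul_apply, hv, map_neg]
  have hsummand : ∀ i ∈ range (2 * n),
      q ^ i * φ ((g ^ i) ((s ^ (2 * n - i)) (g v))) = (-q) ^ i * φ (g v) := by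
    intro i hi
    rw [← Module.End.mul_apply, pow_sub_eq_pow_pred_pow hs (mem_range.1 hi).le,
      ← hcomm'.mul_pow, Module.End.pow_apply_of_apply_eq_neg hT, map_smul, smul_eq_mul,
      neg_pow q]
    ring
  rw [sum_congr rfl hsummand, ← sum_mul, ← mul_assoc, add_one_mul_geom_sum_neg, neg_mul]

/-- Computation `K_α(β) = −⟨β, α∨⟩·(q^{2n}−1)/(q+1)` for roots of the Levi in the
Hasse-type situation, abstracted: `g` is an involution, `s^{2n} = id`, and the
Hasse-type condition reads `g(s^{2n−1}(v)) = −v`. -/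
theorem stmt7 (V : Type*) [AddCommGroup V] [Module ℚ V]
    (g s : Module.End ℚ V) (hcomm : g * s = s * g) (hg : g * g = 1)
    (n : ℕ) (hn : 1 ≤ n) (hs : s ^ (2 * n) = 1)
    (φ : V →ₗ[ℚ] ℚ) (q : ℚ)
    (v : V) (hv : g ((s ^ (2 * n - 1)) v) = -v) :
    (q + 1) * ∑ i ∈ Finset.range (2 * n), q ^ i * φ ((g ^ i) ((s ^ (2 * n - i)) (g v)))
      = -((q ^ (2 * n) - 1) * φ (g v)) :=
  stmt7_general V g s hcomm n hs φ q v hv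
end

section
/- Let N ≥ 1 and m ≥ 1 be integers, let w be a ℤ-linear automorphism of ℤᴺ with wᵐ = id, let q ≥ 2 be an integer, and let f₁, …, f_d : ℤᴺ → ℤ be ℤ-linear maps. Set X₊ = {μ ∈ ℤᴺ : f_k(μ) ≥ 0 for all k} and define h : ℤᴺ → ℤᴺ by h(λ) = λ − q·w(λ). Then for every λ ∈ ℤᴺ the following are equivalent: (a) there exist an integer c ≥ 1 and μ ∈ X₊ with c·λ = h(μ); (b) ∑_{i=0}^{m−1} qⁱ · f_k( wⁱ(λ) ) ≤ 0 for every k = 1, …, d. -/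
/-!
Write `S = ∑_{i<m} (q w)ⁱ`. Since `w ^ m = 1`, the geometric series telescopes to
`S (1 - q w) = (1 - q w) S = 1 - qᵐ`, and `f (S λ) = ∑_{i<m} qⁱ f (wⁱ λ)`.
If `c λ = (1 - q w) μ` with `f μ ≥ 0`, applying `f ∘ S` gives `c f (S λ) = (1 - qᵐ) f μ ≤ 0`.
Conversely, if `f (S λ) ≤ 0` for all `f`, then `μ = -S λ` is dominant and
`(1 - q w) μ = (qᵐ - 1) λ`.
-/

open Finset

section GeomSum

variable {R M : Type*} [CommRing R] [AddCommGroup M] [Module R M]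
  (w : Module.End R M) (q : R) {m : ℕ}

theorem geom_sum_smul_mul_one_sub_smul (hw : w ^ m = 1) :
    (∑ i ∈ range m, (q • w) ^ i) * (1 - q • w) = (1 - q ^ m) • 1 := by
  rw [geom_sum_mul_neg, smul_pow, hw, sub_smul, one_smul]

theorem one_sub_smul_mul_geom_sum_smul (hw : w ^ m = 1) :
    (1 - q • w) * ∑ i ∈ range m, (q • w) ^ i = (1 - q ^ m) • 1 := by
  rw [mul_neg_geom_sum, smul_pow, hw, sub_smul, one_smul]

theorem apply_geom_sum_smul_apply (f : M →ₗ[R] R) (x : M) :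
    f ((∑ i ∈ range m, (q • w) ^ i) x) = ∑ i ∈ range m, q ^ i * f ((w ^ i) x) := by
  simp [LinearMap.sum_apply, smul_pow, map_sum]

theorem pow_sub_one_smul_eq_neg_geom_sum_sub (hw : w ^ m = 1) (x : M) :
    (q ^ m - 1) • x = -(∑ i ∈ range m, (q • w) ^ i) x
      - q • w (-(∑ i ∈ range m, (q • w) ^ i) x) := by
  rw [show ∀ y : M, y - q • w y = (1 - q • w) y from fun _ => rfl, map_neg,
    ← Module.End.mul_apply, one_sub_smul_mul_geom_sum_smul w q hw, LinearMap.smul_apply,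
    Module.End.one_apply, ← neg_smul, neg_sub]

end GeomSum

section Ordered

variable {R M : Type*} [CommRing R] [LinearOrder R] [IsStrictOrderedRing R]
  [AddCommGroup M] [Module R M] (w : Module.End R M) (q : R) {m : ℕ}

theorem sum_pow_mul_apply_pow_nonpos_of_smul_eq (hw : w ^ m = 1) (hqm : 1 ≤ q ^ m)
    (f : M →ₗ[R] R) {c : R} (hc : 0 < c) {x μ : M} (hμ : 0 ≤ f μ)
    (hx : c • x = μ - q • w μ) :
    ∑ i ∈ range m, q ^ i * f ((w ^ i) x) ≤ 0 := by
  have key : c * ∑ i ∈ range m, q ^ i * f ((w ^ i) x) = (1 - q ^ m) * f μ := by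
    rw [← apply_geom_sum_smul_apply, ← smul_eq_mul, ← map_smul, ← map_smul, hx,
      show μ - q • w μ = (1 - q • w) μ from rfl, ← Module.End.mul_apply,
      geom_sum_smul_mul_one_sub_smul w q hw, LinearMap.smul_apply, Module.End.one_apply,
      map_smul, smul_eq_mul]
  refine nonpos_of_mul_nonpos_right ?_ hc
  rw [key]
  exact mul_nonpos_of_nonpos_of_nonneg (by linarith) hμ

end Ordered

theorem stmt9_general (N : ℕ) (m : ℕ) (hm : 1 ≤ m)
    (w : Module.End ℤ (Fin N → ℤ)) (hw : w ^ m = 1)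
    (q : ℤ) (hq : 2 ≤ q)
    (d : ℕ) (f : Fin d → ((Fin N → ℤ) →ₗ[ℤ] ℤ))
    (lam : Fin N → ℤ) :
    (∃ c : ℕ, 1 ≤ c ∧ ∃ μ : Fin N → ℤ, (∀ k, 0 ≤ f k μ) ∧
        (c : ℤ) • lam = μ - q • w μ) ↔
    (∀ k, ∑ i ∈ Finset.range m, q ^ i * f k ((w ^ i) lam) ≤ 0) := by
  have hqm : 2 ≤ q ^ m := hq.trans (le_self_pow₀ (by linarith) (by omega))
  constructor
  · rintro ⟨c, hc, μ, hμ, hx⟩ k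
    exact sum_pow_mul_apply_pow_nonpos_of_smul_eq w q hw (by linarith) (f k)
      (by exact_mod_cast hc) (hμ k) hx
  · intro h
    refine ⟨(q ^ m - 1).toNat, by omega, -(∑ i ∈ range m, (q • w) ^ i) lam,
      fun k => ?_, ?_⟩
    · rw [map_neg, apply_geom_sum_smul_apply]
      linarith [h k]
    · rw [Int.toNat_of_nonneg (by linarith)]
      exact pow_sub_one_smul_eq_neg_geom_sum_sub w q hw lam

/-- Equation (4.13) of the paper, abstracted: the saturation of the image of the
dominant cone `X₊ = {μ : fₖ(μ) ≥ 0 ∀k}` under `h(λ) = λ − q·w(λ)` (where `w` is a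
finite-order linear automorphism of `ℤᴺ` with `wᵐ = id`) is cut out by the
inequalities `∑_{i<m} qⁱ·fₖ(wⁱλ) ≤ 0`. -/
theorem stmt9 (N : ℕ) (hN : 1 ≤ N) (m : ℕ) (hm : 1 ≤ m)
    (w : Module.End ℤ (Fin N → ℤ)) (hw : w ^ m = 1)
    (q : ℤ) (hq : 2 ≤ q)
    (d : ℕ) (f : Fin d → ((Fin N → ℤ) →ₗ[ℤ] ℤ))
    (lam : Fin N → ℤ) :
    (∃ c : ℕ, 1 ≤ c ∧ ∃ μ : Fin N → ℤ, (∀ k, 0 ≤ f k μ) ∧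
        (c : ℤ) • lam = μ - q • w μ) ↔
    (∀ k, ∑ i ∈ Finset.range m, q ^ i * f k ((w ^ i) lam) ≤ 0) :=
  stmt9_general N m hm w hw q hq d f lam
end

section
/- Let q ≥ 2 and n ≥ 2 be integers, and let a₁, a₂, …, aₙ be integers with a₂ ≥ a₃ ≥ … ≥ aₙ ≥ 0. If (q^{2n−2} − 1)·a₁ ≤ (q − 1) · ∑_{i=2}^{n} (q^{i−2} − q^{2n−1−i})·aᵢ, then (q + 1)·a₁ + (q − 1)·a₂ ≤ 0. -/
/-!
Put `P = q ^ (2n-3)`. Since the weights are nonnegative and, for `3 ≤ i ≤ n`, the exponent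
`i - 2` does not exceed `2n - 1 - i`, every term of the sum past `i = 2` is nonpositive, so the
hypothesis gives `(qP - 1) a₁ ≤ (q - 1)(1 - P) a₂`. Multiplying the goal by `qP - 1 > 0` then
reduces it to `(q - 1)(q - P) a₂ ≤ 0`, which holds because `P ≥ q` as soon as `n ≥ 2`.
-/

open Finset

section OrderedRing

variable {R : Type*} [CommRing R] [LinearOrder R] [IsStrictOrderedRing R]

theorem add_mul_add_sub_mul_nonpos_of_mul_le {q P a₁ a₂ : R} (hq : 1 < q) (hqP : q ≤ P)
    (ha₂ : 0 ≤ a₂) (h : (q * P - 1) * a₁ ≤ (q - 1) * (1 - P) * a₂) :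
    (q + 1) * a₁ + (q - 1) * a₂ ≤ 0 := by
  have hqP_pos : 0 < q * P - 1 := by nlinarith
  refine nonpos_of_mul_nonpos_right ?_ hqP_pos
  calc (q * P - 1) * ((q + 1) * a₁ + (q - 1) * a₂)
      = (q + 1) * ((q * P - 1) * a₁) + (q - 1) * (q * P - 1) * a₂ := by ring
    _ ≤ (q + 1) * ((q - 1) * (1 - P) * a₂) + (q - 1) * (q * P - 1) * a₂ := by gcongr
    _ = (q - 1) * a₂ * (q - P) := by ring
    _ ≤ 0 := mul_nonpos_of_nonneg_of_nonpos (mul_nonneg (by linarith) ha₂) (by linarith)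

theorem sum_Ioc_pow_sub_pow_mul_nonpos {q : R} (hq : 1 ≤ q) {a : ℕ → R} {n : ℕ}
    (ha : ∀ i ∈ Ioc 2 n, 0 ≤ a i) :
    ∑ i ∈ Ioc 2 n, (q ^ (i - 2) - q ^ (2 * n - 1 - i)) * a i ≤ 0 := by
  refine sum_nonpos fun i hi ↦ mul_nonpos_of_nonpos_of_nonneg ?_ (ha i hi)
  have hin := (mem_Ioc.mp hi).2
  exact sub_nonpos.mpr (pow_le_pow_right₀ hq (by omega))

end OrderedRing

theorem nonneg_on_Icc_of_succ_le {β : Type*} [Preorder β] [Zero β] {a : ℕ → β} {m n : ℕ}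
    (hmono : ∀ i, m ≤ i → i < n → a (i + 1) ≤ a i) (hlast : 0 ≤ a n) :
    ∀ i ∈ Icc m n, 0 ≤ a i := by
  have hanti : AntitoneOn a (Set.Icc m n) :=
    antitoneOn_of_add_one_le Set.ordConnected_Icc fun i _ hi hi' ↦ hmono i hi.1 hi'.2
  intro i hi
  have hi : i ∈ Set.Icc m n := by simpa using hi
  exact hlast.trans (hanti hi (Set.right_mem_Icc.mpr (hi.1.trans hi.2)) hi.2)

/-- Inclusion `C_hw ⊆ C_pHa` for SO(2n+1) (discussion after Proposition 7.2):
if `a₂ ≥ a₃ ≥ … ≥ aₙ ≥ 0` and `(q^{2n−2}−1)a₁ ≤ (q−1)∑_{i=2}^{n}(q^{i−2}−q^{2n−1−i})aᵢ`,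
then `(q+1)a₁ + (q−1)a₂ ≤ 0`. -/
theorem stmt11 (q : ℤ) (hq : 2 ≤ q) (n : ℕ) (hn : 2 ≤ n) (a : ℕ → ℤ)
    (hmono : ∀ i, 2 ≤ i → i < n → a (i + 1) ≤ a i)
    (hlast : 0 ≤ a n)
    (h : (q ^ (2 * n - 2) - 1) * a 1 ≤
        (q - 1) * ∑ i ∈ Finset.Icc 2 n, (q ^ (i - 2) - q ^ (2 * n - 1 - i)) * a i) :
    (q + 1) * a 1 + (q - 1) * a 2 ≤ 0 := by
  set P := q ^ (2 * n - 3)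
  have ha := nonneg_on_Icc_of_succ_le hmono hlast
  have hP : q ^ (2 * n - 2) = q * P := by rw [← pow_succ']; congr 1; omega
  have hqP : q ≤ P := le_self_pow₀ (by linarith) (by omega)
  have htail := sum_Ioc_pow_sub_pow_mul_nonpos (q := q) (by linarith)
    fun i hi ↦ ha i (Ioc_subset_Icc_self hi)
  rw [← add_sum_Ioc_eq_sum_Icc hn, show 2 * n - 1 - 2 = 2 * n - 3 by omega, Nat.sub_self,
    pow_zero, hP] at h
  refine add_mul_add_sub_mul_nonpos_of_mul_le (by linarith) hqP (ha 2 (mem_Icc.mpr ⟨le_rfl, hn⟩)) ?_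
  calc (q * P - 1) * a 1 ≤ (q - 1) * ((1 - P) * a 2 + _) := h
    _ ≤ (q - 1) * ((1 - P) * a 2) :=
      mul_le_mul_of_nonneg_left (add_le_of_nonpos_right htail) (by linarith)
    _ = (q - 1) * (1 - P) * a 2 := by ring
end
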